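/- Let a > 1 and let h : ℕ → ℕ be a function which is not the binomial function n ↦ C(a+n-1, n). Suppose h = h_0 + h_1[-1] + ⋯ + h_r[-r] = g_0 + g_1[-1] + ⋯ + g_{r'}[-r'] are two decompositions with r, r' ≥ 1 and Macaulay functions h_0, …, h_r and g_0, …, g_{r'} each satisfying: h_i(1) = a-1 for 0 ≤ i < r, h_r(1) ≤ a-1, and for 1 ≤ i ≤ r either s_0(h_{i-1}) = ∞ or h_i has finite support with sup h_i < s_0(h_{i-1}) - 1 (and the analogous conditions for the g_i). Then r = r' and h_i = g_i for all 0 ≤ i ≤ r. -/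

import Mathlib

open scoped BigOperators

/-- The largest `m` with `C(m, i) ≤ α` (for `i ≥ 1`, `α ≥ 1` this is the leading
exponent of the `i`-binomial development of `α`). -/
noncomputable def lead (α i : ℕ) : ℕ := sSup {m : ℕ | Nat.choose m i ≤ α}

/-- `binUp i α = α^{<i>}`, defined through the `i`-binomial development of `α`:
if `α = C(m_i, i) + C(m_{i-1}, i-1) + ⋯ + C(m_j, j)` with
`m_i > m_{i-1} > ⋯ > m_j ≥ j ≥ 1`, then
`binUp i α = C(m_i+1, i+1) + C(m_{i-1}+1, i) + ⋯ + C(m_j+1, j+1)`, and `binUp i 0 = 0`. -/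
noncomputable def binUp : ℕ → ℕ → ℕ
  | 0, _ => 0
  | (i+1), α =>
    if α = 0 then 0
    else Nat.choose (lead α (i+1) + 1) (i+2) +
      binUp i (α - Nat.choose (lead α (i+1)) (i+1))

/-- `h : ℕ → ℕ` is a Macaulay function if `h 0 = 1` and `h (i+1) ≤ (h i)^{<i>}`
for every `i ≥ 1`. -/
def MacaulayFun (h : ℕ → ℕ) : Prop :=
  h 0 = 1 ∧ ∀ i, 1 ≤ i → h (i+1) ≤ binUp i (h i)

/-- `s₀(h) = inf {n | h n < C(a+n-1, n)} ∈ ℕ ∪ {∞}` for a Macaulay function of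
type `a = h 1`. -/
noncomputable def s0M (h : ℕ → ℕ) : ℕ∞ :=
  sInf {x : ℕ∞ | ∃ n : ℕ, x = (n : ℕ∞) ∧ h n < Nat.choose (h 1 + n - 1) n}

/-- `sup f = max {n | f n ≠ 0}` for a finitely supported `f : ℕ → ℕ`. -/
noncomputable def supN (f : ℕ → ℕ) : ℕ := sSup {n : ℕ | f n ≠ 0}

/-- A character: a finitely supported `γ : ℤ → ℤ` with `∑ γ(n) = 0`. -/
def IsChar (γ : ℤ → ℤ) : Prop :=
  (Function.support γ).Finite ∧ ∑ᶠ n, γ n = 0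

/-- `s₀(γ) = inf {n ≥ 0 | γ n ≠ -1}`. -/
noncomputable def s0C (γ : ℤ → ℤ) : ℤ := sInf {n : ℤ | 0 ≤ n ∧ γ n ≠ -1}

/-- A positive character: `γ(n) = 0` for `n < 0`, `γ(0) = -1` and `γ(n) ≥ 0`
for every `n ≥ s₀(γ)`. -/
def PosChar (γ : ℤ → ℤ) : Prop :=
  IsChar γ ∧ (∀ n < 0, γ n = 0) ∧ γ 0 = -1 ∧ ∀ n : ℤ, s0C γ ≤ n → 0 ≤ γ n

/-- `sup γ = max {n | γ n ≠ 0}` for a finitely supported `γ : ℤ → ℤ`. -/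
noncomputable def supZ (γ : ℤ → ℤ) : ℤ := sSup {n : ℤ | γ n ≠ 0}

/-- `IsDev α i j m` says that `α = C(m_i, i) + C(m_{i-1}, i-1) + ⋯ + C(m_j, j)`
with `m_i > m_{i-1} > ⋯ > m_j ≥ j ≥ 1` is the `i`-binomial development of `α`. -/
def IsDev (α i j : ℕ) (m : ℕ → ℕ) : Prop :=
  1 ≤ j ∧ j ≤ i ∧ j ≤ m j ∧ (∀ k, j ≤ k → k < i → m k < m (k+1)) ∧
    α = ∑ k ∈ Finset.Icc j i, Nat.choose (m k) k

/-!
By Macaulay's bound `h₀` lies below the binomial function `n ↦ C(a + n - 2, n)` of its type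
`a - 1`. Wherever it drops strictly below, say at `s`, we have `s₀(h₀) ≤ s` and `a - 1 ≥ 1`. A
finitely supported `hᵢ` of positive type has `s₀(hᵢ) ≤ sup hᵢ + 1`, so the gap conditions push
`sup hᵢ + i` below `s` one index at a time, and `h(s) = h₀(s)`. Hence for `r ≥ 1` the head
`h₀ = min(h, C(a + n - 2, n))` is determined by `h`. Peeling it off leaves the decomposition
`n ↦ h(n+1) - h₀(n+1) = h₁ + ⋯ + h_r[-(r-1)]`, while `r = 0` is detected by `h(1) ≤ a - 1`
(otherwise `h(1) = h₀(1) + h₁(0) = a`). Induction on `r` concludes.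
-/

open Finset

lemma lt_choose_add (α : ℕ) {i : ℕ} (hi : 1 ≤ i) : α < Nat.choose (α + i) i := by
  rw [← Nat.choose_symm_add]
  calc α < α + 1 := Nat.lt_succ_self α
    _ = Nat.choose (α + 1) α := (Nat.choose_succ_self_right α).symm
    _ ≤ Nat.choose (α + i) α := Nat.choose_le_choose α (by omega)

section Lead

variable {i : ℕ}

lemma bddAbove_choose_le (α : ℕ) (hi : 1 ≤ i) : BddAbove {m : ℕ | Nat.choose m i ≤ α} :=
  ⟨α + i, fun m hm => by
    by_contra hlt
    have := Nat.choose_le_choose i (le_of_not_ge hlt)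
    have := lt_choose_add α hi
    simp only [Set.mem_ofPred_eq] at hm
    omega⟩

lemma choose_lead_le (α : ℕ) (hi : 1 ≤ i) : Nat.choose (lead α i) i ≤ α :=
  Nat.sSup_mem ⟨0, by simp [Nat.choose_eq_zero_of_lt hi]⟩ (bddAbove_choose_le α hi)

lemma lt_choose_lead_add_one (α : ℕ) (hi : 1 ≤ i) : α < Nat.choose (lead α i + 1) i := by
  by_contra! hle
  have : lead α i + 1 ≤ lead α i := le_csSup (bddAbove_choose_le α hi) hle
  omega

lemma lead_lt_of_lt_choose {α m : ℕ} (hi : 1 ≤ i) (h : α < Nat.choose m i) : lead α i < m := by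
  by_contra! hle
  have := Nat.choose_le_choose i hle
  have := choose_lead_le α hi
  omega

lemma lead_choose_succ {m : ℕ} (hm : i + 1 ≤ m) : lead (Nat.choose m (i + 1)) (i + 1) = m := by
  have hm_le : m ≤ lead (Nat.choose m (i + 1)) (i + 1) :=
    le_csSup (bddAbove_choose_le _ (by omega))
      (show Nat.choose m (i + 1) ≤ Nat.choose m (i + 1) from le_rfl)
  have hlt : Nat.choose m (i + 1) < Nat.choose (m + 1) (i + 1) := by
    rw [Nat.choose_succ_succ']
    have := Nat.choose_pos (show i ≤ m by omega)
    omega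
  have := lead_lt_of_lt_choose (by omega) hlt
  omega

end Lead

lemma binUp_zero_right (i : ℕ) : binUp i 0 = 0 := by
  cases i <;> simp [binUp]

lemma binUp_succ_of_ne_zero {i α : ℕ} (hα : α ≠ 0) :
    binUp (i + 1) α = Nat.choose (lead α (i + 1) + 1) (i + 2) +
      binUp i (α - Nat.choose (lead α (i + 1)) (i + 1)) := by
  rw [binUp, if_neg hα]

lemma binUp_lt_choose : ∀ {i α m : ℕ}, α < Nat.choose m i →
    binUp i α < Nat.choose (m + 1) (i + 1)
  | 0, _, m, _ => by simp [binUp]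
  | i + 1, α, m, h => by
    rcases Nat.eq_zero_or_pos α with rfl | hα
    · rw [binUp_zero_right]
      have := Nat.choose_eq_zero_iff.not.mp h.ne'
      exact Nat.choose_pos (by omega)
    have hL_le := choose_lead_le α (i := i + 1) (by omega)
    have hL_lt := lt_choose_lead_add_one α (i := i + 1) (by omega)
    have hLm := lead_lt_of_lt_choose (by omega) h
    rw [binUp_succ_of_ne_zero hα.ne']
    generalize lead α (i + 1) = L at *
    rw [Nat.choose_succ_succ'] at hL_lt
    have hrest : binUp i (α - Nat.choose L (i + 1)) < Nat.choose (L + 1) (i + 1) :=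
      binUp_lt_choose (by omega)
    calc _ < Nat.choose (L + 1) (i + 2) + Nat.choose (L + 1) (i + 1) := by omega
      _ = Nat.choose (L + 2) (i + 2) := by rw [Nat.choose_succ_succ' (L + 1) (i + 1)]; ring
      _ ≤ Nat.choose (m + 1) (i + 2) := Nat.choose_le_choose _ (by omega)

lemma binUp_choose (i m : ℕ) :
    binUp (i + 1) (Nat.choose m (i + 1)) = Nat.choose (m + 1) (i + 2) := by
  rcases lt_or_ge m (i + 1) with hm | hm
  · rw [Nat.choose_eq_zero_of_lt hm, Nat.choose_eq_zero_of_lt (by omega), binUp_zero_right]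
  · rw [binUp_succ_of_ne_zero (Nat.choose_pos hm).ne', lead_choose_succ hm, Nat.sub_self,
      binUp_zero_right, add_zero]

lemma binUp_le_choose {i α m : ℕ} (hi : 1 ≤ i) (h : α ≤ Nat.choose m i) :
    binUp i α ≤ Nat.choose (m + 1) (i + 1) := by
  obtain ⟨i, rfl⟩ : ∃ j, i = j + 1 := ⟨i - 1, by omega⟩
  rcases h.lt_or_eq with h | rfl
  · exact (binUp_lt_choose h).le
  · exact (binUp_choose i m).le

namespace MacaulayFun

variable {f : ℕ → ℕ}

lemma le_choose (hf : MacaulayFun f) : ∀ n, f n ≤ Nat.choose (f 1 + n - 1) n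
  | 0 => by simp [hf.1]
  | 1 => by simp
  | n + 2 =>
    calc f (n + 2) ≤ binUp (n + 1) (f (n + 1)) := hf.2 (n + 1) (by omega)
      _ ≤ Nat.choose (f 1 + (n + 1) - 1 + 1) (n + 2) :=
        binUp_le_choose (by omega) (hf.le_choose (n + 1))
      _ = Nat.choose (f 1 + (n + 2) - 1) (n + 2) := by
        rw [show f 1 + (n + 1) - 1 + 1 = f 1 + (n + 2) - 1 by omega]

lemma one_le_apply_one (hf : MacaulayFun f) {s : ℕ} (hs : f s < Nat.choose (f 1 + s - 1) s) :
    1 ≤ f 1 := by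
  by_contra! h0
  rcases s with _ | s
  · simp [hf.1] at hs
  · rw [show f 1 = 0 by omega, Nat.choose_eq_zero_of_lt (by omega)] at hs
    omega

end MacaulayFun

section Support

variable {f g : ℕ → ℕ}

lemma s0M_le {n : ℕ} (h : f n < Nat.choose (f 1 + n - 1) n) : s0M f ≤ n :=
  sInf_le ⟨n, rfl, h⟩

lemma apply_eq_zero_of_supN_lt (hf : f.support.Finite) {n : ℕ} (h : supN f < n) : f n = 0 := by
  by_contra hn
  exact absurd (le_csSup hf.bddAbove hn) (not_le.mpr h)

lemma s0M_le_supN_add_one (hf : f.support.Finite) (h1 : 1 ≤ f 1) :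
    s0M f ≤ ((supN f + 1 : ℕ) : ℕ∞) := by
  apply s0M_le
  rw [apply_eq_zero_of_supN_lt hf (Nat.lt_succ_self _)]
  exact Nat.choose_pos (by omega)

def GapCondition (f g : ℕ → ℕ) : Prop :=
  s0M f = ⊤ ∨ (g.support.Finite ∧ (supN g : ℕ∞) + 1 < s0M f)

lemma GapCondition.finite_and_supN_lt (hfg : GapCondition f g) {t : ℕ} (ht : s0M f ≤ t) :
    g.support.Finite ∧ supN g + 1 < t := by
  rcases hfg with htop | ⟨hfin, hlt⟩
  · rw [htop, top_le_iff] at ht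
    exact absurd ht (ENat.natCast_ne_top t)
  · exact ⟨hfin, by exact_mod_cast hlt.trans_le ht⟩

end Support

/-- `shiftedSum H r = H 0 + (H 1)[-1] + ⋯ + (H r)[-r]`. -/
def shiftedSum (H : ℕ → ℕ → ℕ) (r n : ℕ) : ℕ :=
  ∑ i ∈ range (r + 1), if i ≤ n then H i (n - i) else 0

section ShiftedSum

variable (H : ℕ → ℕ → ℕ)

lemma shiftedSum_zero_left (n : ℕ) : shiftedSum H 0 n = H 0 n := by
  simp [shiftedSum]

lemma shiftedSum_zero_right (r : ℕ) : shiftedSum H r 0 = H 0 0 := by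
  rw [shiftedSum, sum_eq_single_of_mem 0 (by simp)]
  · simp
  · intro i _ hi
    rw [if_neg (by omega)]

lemma shiftedSum_succ_succ (r n : ℕ) :
    shiftedSum H (r + 1) (n + 1) = H 0 (n + 1) + shiftedSum (fun i => H (i + 1)) r n := by
  rw [shiftedSum, sum_range_succ', add_comm]
  simp [shiftedSum]

lemma head_le_shiftedSum (r n : ℕ) : H 0 n ≤ shiftedSum H r n := by
  unfold shiftedSum
  simpa using single_le_sum (f := fun i => if i ≤ n then H i (n - i) else 0)
    (fun i _ => Nat.zero_le _) (mem_range.mpr (Nat.succ_pos r))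

end ShiftedSum

structure IsMacaulayDecomp (a r : ℕ) (H : ℕ → ℕ → ℕ) : Prop where
  macaulay : ∀ i ≤ r, MacaulayFun (H i)
  type_eq : ∀ i < r, H i 1 = a - 1
  type_le : H r 1 ≤ a - 1
  gap : ∀ i < r, GapCondition (H i) (H (i + 1))

namespace IsMacaulayDecomp

variable {a r : ℕ} {H : ℕ → ℕ → ℕ}

lemma tail (D : IsMacaulayDecomp a (r + 1) H) : IsMacaulayDecomp a r (fun i => H (i + 1)) where
  macaulay i hi := D.macaulay (i + 1) (by omega)
  type_eq i hi := D.type_eq (i + 1) (by omega)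
  type_le := D.type_le
  gap i hi := D.gap (i + 1) (by omega)

lemma shiftedSum_one_le_iff (D : IsMacaulayDecomp a r H) : shiftedSum H r 1 ≤ a - 1 ↔ r = 0 := by
  rcases r with _ | r
  · simpa [shiftedSum_zero_left] using D.type_le
  · rw [shiftedSum_succ_succ, shiftedSum_zero_right, D.type_eq 0 (by omega),
      (D.macaulay 1 (by omega)).1]
    omega

lemma finite_and_supN_add_lt (D : IsMacaulayDecomp a r H) {s : ℕ}
    (hs : H 0 s < Nat.choose (H 0 1 + s - 1) s) :
    ∀ i, 1 ≤ i → i ≤ r → (H i).support.Finite ∧ supN (H i) + i < s := by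
  intro i hi
  induction i, hi using Nat.le_induction with
  | base =>
    intro hr
    obtain ⟨hfin, hlt⟩ := (D.gap 0 (by omega)).finite_and_supN_lt (s0M_le hs)
    exact ⟨hfin, by simpa using hlt⟩
  | succ i hi ih =>
    intro hr
    obtain ⟨hfin, hlt⟩ := ih (by omega)
    have htype : 1 ≤ H i 1 := by
      rw [D.type_eq i (by omega), ← D.type_eq 0 (by omega)]
      exact (D.macaulay 0 (by omega)).one_le_apply_one hs
    have := (D.gap i (by omega)).finite_and_supN_lt (s0M_le_supN_add_one hfin htype)
    exact ⟨this.1, by omega⟩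

lemma shiftedSum_eq_head (D : IsMacaulayDecomp a r H) {s : ℕ}
    (hs : H 0 s < Nat.choose (H 0 1 + s - 1) s) : shiftedSum H r s = H 0 s := by
  rw [shiftedSum, sum_eq_single_of_mem 0 (by simp)]
  · simp
  · intro i hi hi0
    rw [mem_range] at hi
    split_ifs with his
    · obtain ⟨hfin, hlt⟩ := D.finite_and_supN_add_lt hs i (by omega) (by omega)
      exact apply_eq_zero_of_supN_lt hfin (by omega)
    · rfl

lemma head_eq_min (D : IsMacaulayDecomp a r H) (n : ℕ) :
    H 0 n = min (shiftedSum H r n) (Nat.choose (H 0 1 + n - 1) n) := by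
  have hle := (D.macaulay 0 (Nat.zero_le r)).le_choose n
  by_cases hs : H 0 n < Nat.choose (H 0 1 + n - 1) n
  · rw [D.shiftedSum_eq_head hs]
    omega
  · have := head_le_shiftedSum H r n
    omega

theorem eq_of_shiftedSum_eq {r' : ℕ} {G : ℕ → ℕ → ℕ} (D : IsMacaulayDecomp a r H)
    (E : IsMacaulayDecomp a r' G) (hHG : ∀ n, shiftedSum H r n = shiftedSum G r' n) :
    r = r' ∧ ∀ i ≤ r, ∀ n, H i n = G i n := by
  induction r generalizing r' H G with
  | zero =>
    obtain rfl : r' = 0 := E.shiftedSum_one_le_iff.mp (hHG 1 ▸ D.shiftedSum_one_le_iff.mpr rfl)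
    refine ⟨rfl, fun i hi n => ?_⟩
    obtain rfl : i = 0 := by omega
    simpa [shiftedSum_zero_left] using hHG n
  | succ r ih =>
    obtain ⟨r', rfl⟩ : ∃ k, r' = k + 1 := Nat.exists_eq_succ_of_ne_zero fun hr' =>
      absurd (D.shiftedSum_one_le_iff.mp (hHG 1 ▸ E.shiftedSum_one_le_iff.mpr hr')) r.succ_ne_zero
    have hhead : ∀ n, H 0 n = G 0 n := fun n => by
      rw [D.head_eq_min, E.head_eq_min, hHG n, D.type_eq 0 r.succ_pos, E.type_eq 0 r'.succ_pos]
    have htail : ∀ n, shiftedSum (fun i => H (i + 1)) r n = shiftedSum (fun i => G (i + 1)) r' n :=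
      fun n => by
        have := hHG (n + 1)
        rw [shiftedSum_succ_succ, shiftedSum_succ_succ, hhead] at this
        omega
    obtain ⟨rfl, hH⟩ := ih D.tail E.tail htail
    refine ⟨rfl, fun i hi n => ?_⟩
    rcases i with _ | i
    · exact hhead n
    · exact hH i (by omega) n

end IsMacaulayDecomp

theorem macaulay_decomposition_unique_general (a : ℕ) (h : ℕ → ℕ) (r r' : ℕ) (H G : ℕ → ℕ → ℕ)
    (hMH : ∀ i ≤ r, MacaulayFun (H i))
    (htypeH : ∀ i < r, H i 1 = a - 1) (htyperH : H r 1 ≤ a - 1)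
    (hgapH : ∀ i, 1 ≤ i → i ≤ r →
      s0M (H (i - 1)) = ⊤ ∨
        ((Function.support (H i)).Finite ∧
          (supN (H i) : ℕ∞) + 1 < s0M (H (i - 1))))
    (hMG : ∀ i ≤ r', MacaulayFun (G i))
    (htypeG : ∀ i < r', G i 1 = a - 1) (htyperG : G r' 1 ≤ a - 1)
    (hgapG : ∀ i, 1 ≤ i → i ≤ r' →
      s0M (G (i - 1)) = ⊤ ∨
        ((Function.support (G i)).Finite ∧
          (supN (G i) : ℕ∞) + 1 < s0M (G (i - 1))))
    (hdecH : ∀ n, h n = ∑ i ∈ Finset.range (r + 1),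
      if i ≤ n then H i (n - i) else 0)
    (hdecG : ∀ n, h n = ∑ i ∈ Finset.range (r' + 1),
      if i ≤ n then G i (n - i) else 0) :
    r = r' ∧ ∀ i ≤ r, ∀ n, H i n = G i n := by
  have D : IsMacaulayDecomp a r H :=
    ⟨hMH, htypeH, htyperH, fun i hi => by
      simpa [GapCondition] using hgapH (i + 1) (by omega) (by omega)⟩
  have E : IsMacaulayDecomp a r' G :=
    ⟨hMG, htypeG, htyperG, fun i hi => by
      simpa [GapCondition] using hgapG (i + 1) (by omega) (by omega)⟩
  exact D.eq_of_shiftedSum_eq E fun n => (hdecH n).symm.trans (hdecG n)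

/-- Theorem 2.20, uniqueness: two decompositions
`h = h₀ + h₁[-1] + ⋯ + h_r[-r] = g₀ + g₁[-1] + ⋯ + g_{r'}[-r']` of a
non-binomial function `h` satisfying the type and gap conditions coincide:
`r = r'` and `hᵢ = gᵢ` for all `i`. -/
theorem macaulay_decomposition_unique (a : ℕ) (ha : 1 < a) (h : ℕ → ℕ)
    (hnb : ∃ n, h n ≠ Nat.choose (a + n - 1) n)
    (r r' : ℕ) (hr : 1 ≤ r) (hr' : 1 ≤ r')
    (H G : ℕ → ℕ → ℕ)
    (hMH : ∀ i ≤ r, MacaulayFun (H i))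
    (htypeH : ∀ i < r, H i 1 = a - 1) (htyperH : H r 1 ≤ a - 1)
    (hgapH : ∀ i, 1 ≤ i → i ≤ r →
      s0M (H (i - 1)) = ⊤ ∨
        ((Function.support (H i)).Finite ∧
          (supN (H i) : ℕ∞) + 1 < s0M (H (i - 1))))
    (hMG : ∀ i ≤ r', MacaulayFun (G i))
    (htypeG : ∀ i < r', G i 1 = a - 1) (htyperG : G r' 1 ≤ a - 1)
    (hgapG : ∀ i, 1 ≤ i → i ≤ r' →
      s0M (G (i - 1)) = ⊤ ∨
        ((Function.support (G i)).Finite ∧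
          (supN (G i) : ℕ∞) + 1 < s0M (G (i - 1))))
    (hdecH : ∀ n, h n = ∑ i ∈ Finset.range (r + 1),
      if i ≤ n then H i (n - i) else 0)
    (hdecG : ∀ n, h n = ∑ i ∈ Finset.range (r' + 1),
      if i ≤ n then G i (n - i) else 0) :
    r = r' ∧ ∀ i ≤ r, ∀ n, H i n = G i n :=
  macaulay_decomposition_unique_general a h r r' H G hMH htypeH htyperH hgapH hMG htypeG htyperG
    hgapG hdecH hdecG
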